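/- Let k, a ∈ ℝ, σ > 0, T > 0, let B : [0,T] → ℝ be continuous with B(0) = 0, and let Y : [0,T] → ℝ be continuous and strictly positive with Y(t) = Y(0) + (1/2)∫₀ᵗ (k/Y(s) − a·Y(s)) ds + (σ/2)·B(t) for all t ∈ [0,T]. Set X = Y². Then the pathwise Stratonovich integral of √X against B over [0,T] exists, i.e. there is a real number S such that for every sequence of partitions 0 = t₀ < t₁ < ⋯ < tₙ = T whose mesh tends to zero, the Stratonovich (midpoint) sums Σᵢ ((√X(tᵢ) + √X(tᵢ₋₁))/2)·(B(tᵢ) − B(tᵢ₋₁)) converge to S, and moreover X(T) = X(0) + ∫₀ᵀ (k − a·X(s)) ds + σ·S. -/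

import Mathlib

/-!
Solving the equation for `B` gives `σ B = 2 (Y - Y 0) - ∫₀ g` on `[0, T]`, with
`g = k / Y - a Y`, and `√X = Y` there. The midpoint sums of `Y` against `Y` telescope exactly
to `Y T ² - Y 0 ²`, because `(y + x) / 2 * (y - x) = (y² - x²) / 2`; against `∫₀ g` they are
Riemann sums of `∫₀ᵀ Y g = ∫₀ᵀ (k - a X)`, with an error bounded by the modulus of continuity
of `Y` times `T sup |g|`.
-/

open Set intervalIntegral

def IsPartition (a b : ℝ) (n : ℕ) (t : ℕ → ℝ) : Prop :=
  t 0 = a ∧ t n = b ∧ ∀ i < n, t i < t (i + 1)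

noncomputable def stratonovichSum (f F : ℝ → ℝ) (n : ℕ) (t : ℕ → ℝ) : ℝ :=
  ∑ i ∈ Finset.range n, (f (t (i + 1)) + f (t i)) / 2 * (F (t (i + 1)) - F (t i))

namespace IsPartition

variable {a b : ℝ} {n : ℕ} {t : ℕ → ℝ}

theorem strictMonoOn (hP : IsPartition a b n t) : StrictMonoOn t (Iic n) :=
  strictMonoOn_Iic_of_lt_succ fun i hi => by simpa using hP.2.2 i hi

theorem mem_Icc (hP : IsPartition a b n t) {i : ℕ} (hi : i ≤ n) : t i ∈ Icc a b :=
  ⟨hP.1 ▸ hP.strictMonoOn.monotoneOn (Nat.zero_le n) hi (Nat.zero_le i),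
    hP.2.1 ▸ hP.strictMonoOn.monotoneOn hi (le_refl n) hi⟩

theorem le (hP : IsPartition a b n t) : a ≤ b :=
  (hP.mem_Icc le_rfl).1.trans (hP.mem_Icc le_rfl).2

theorem uIcc_subset (hP : IsPartition a b n t) {i : ℕ} (hi : i < n) :
    uIcc (t i) (t (i + 1)) ⊆ Icc a b :=
  uIcc_subset_Icc (hP.mem_Icc hi.le) (hP.mem_Icc hi)

theorem intervalIntegrable {g : ℝ → ℝ} (hP : IsPartition a b n t) (hg : ContinuousOn g (Icc a b))
    {i : ℕ} (hi : i < n) : IntervalIntegrable g MeasureTheory.volume (t i) (t (i + 1)) :=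
  (hg.mono (hP.uIcc_subset hi)).intervalIntegrable

theorem sum_sub (hP : IsPartition a b n t) : ∑ i ∈ Finset.range n, (t (i + 1) - t i) = b - a := by
  rw [Finset.sum_range_sub, hP.1, hP.2.1]

theorem sum_integral {g : ℝ → ℝ} (hP : IsPartition a b n t) (hg : ContinuousOn g (Icc a b)) :
    ∑ i ∈ Finset.range n, ∫ s in t i..t (i + 1), g s = ∫ s in a..b, g s := by
  rw [sum_integral_adjacent_intervals (a := t) fun i hi => hP.intervalIntegrable hg hi, hP.1,
    hP.2.1]

end IsPartition

section stratonovichSum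

variable {f f' F F' G : ℝ → ℝ} {n : ℕ} {t : ℕ → ℝ}

theorem stratonovichSum_congr (hf : ∀ i ≤ n, f (t i) = f' (t i))
    (hF : ∀ i ≤ n, F (t i) = F' (t i)) :
    stratonovichSum f F n t = stratonovichSum f' F' n t :=
  Finset.sum_congr rfl fun i hi => by
    have hi : i < n := Finset.mem_range.1 hi
    rw [hf i hi.le, hf (i + 1) hi, hF i hi.le, hF (i + 1) hi]

theorem stratonovichSum_affine (c d e : ℝ) :
    stratonovichSum f (fun s => c * F s + d * G s + e) n t =
      c * stratonovichSum f F n t + d * stratonovichSum f G n t := by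
  simp only [stratonovichSum, Finset.mul_sum, ← Finset.sum_add_distrib]
  exact Finset.sum_congr rfl fun i _ => by ring

theorem stratonovichSum_self : stratonovichSum f f n t = (f (t n) ^ 2 - f (t 0) ^ 2) / 2 := by
  rw [← Finset.sum_range_sub (fun i => f (t i) ^ 2), Finset.sum_div]
  exact Finset.sum_congr rfl fun i _ => by ring

end stratonovichSum

theorem IsPartition.stratonovichSum_sqrt_sq_eq {a b c σ : ℝ} {Y B G : ℝ → ℝ} {n : ℕ}
    {t : ℕ → ℝ} (hP : IsPartition a b n t) (hσ : σ ≠ 0) (hYpos : ∀ s ∈ Icc a b, 0 < Y s)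
    (hY : ∀ s ∈ Icc a b, Y s = c + 1 / 2 * G s + σ / 2 * B s) :
    stratonovichSum (fun s => √(Y s ^ 2)) B n t =
      (Y b ^ 2 - Y a ^ 2 - stratonovichSum Y G n t) / σ := by
  have hB : ∀ s ∈ Icc a b, B s = 2 / σ * Y s + (-1 / σ) * G s + (-2 * c / σ) := by
    intro s hs
    rw [hY s hs]
    field_simp
    ring
  rw [stratonovichSum_congr (f' := Y) (F' := fun s => 2 / σ * Y s + (-1 / σ) * G s + (-2 * c / σ))
    (fun i hi => Real.sqrt_sq (hYpos (t i) (hP.mem_Icc hi)).le)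
    (fun i hi => hB (t i) (hP.mem_Icc hi)), stratonovichSum_affine, stratonovichSum_self, hP.1,
    hP.2.1]
  ring

theorem abs_integral_midpoint_sub_mul_le {u v η M : ℝ} {f g : ℝ → ℝ} (huv : u ≤ v)
    (hf : ∀ s ∈ Icc u v, |f u - f s| ≤ η ∧ |f v - f s| ≤ η) (hg : ∀ s ∈ Icc u v, |g s| ≤ M) :
    |∫ s in u..v, ((f v + f u) / 2 - f s) * g s| ≤ η * M * (v - u) := by
  have hbound : ∀ s ∈ uIoc u v, ‖((f v + f u) / 2 - f s) * g s‖ ≤ η * M := by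
    intro s hs
    rw [uIoc_of_le huv] at hs
    obtain ⟨hu, hv⟩ := hf s (Ioc_subset_Icc_self hs)
    have hmid : |(f v + f u) / 2 - f s| ≤ η := by
      rw [abs_le] at hu hv ⊢
      constructor <;> linarith
    rw [Real.norm_eq_abs, abs_mul]
    exact mul_le_mul hmid (hg s (Ioc_subset_Icc_self hs)) (abs_nonneg _)
      ((abs_nonneg _).trans hu)
  simpa [abs_of_nonneg (sub_nonneg.2 huv)] using norm_integral_le_of_norm_le_const hbound

theorem IsPartition.stratonovichSum_integral_sub_integral_mul {a b : ℝ} {f g : ℝ → ℝ} {n : ℕ}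
    {t : ℕ → ℝ} (hP : IsPartition a b n t) (hf : ContinuousOn f (Icc a b))
    (hg : ContinuousOn g (Icc a b)) :
    stratonovichSum f (fun s => ∫ u in a..s, g u) n t - ∫ s in a..b, f s * g s =
      ∑ i ∈ Finset.range n,
        ∫ s in t i..t (i + 1), ((f (t (i + 1)) + f (t i)) / 2 - f s) * g s := by
  rw [← hP.sum_integral (g := fun s => f s * g s) (hf.mul hg), stratonovichSum,
    ← Finset.sum_sub_distrib]
  refine Finset.sum_congr rfl fun i hi => ?_
  have hi : i < n := Finset.mem_range.1 hi
  have hint : ∀ j ≤ n, IntervalIntegrable g MeasureTheory.volume a (t j) := fun j hj =>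
    (hg.mono <| uIcc_subset_Icc (left_mem_Icc.2 hP.le) (hP.mem_Icc hj)).intervalIntegrable
  rw [integral_interval_sub_left (hint _ hi) (hint _ hi.le), ← integral_const_mul,
    ← integral_sub ((hP.intervalIntegrable hg hi).const_mul _)
      (hP.intervalIntegrable (g := fun s => f s * g s) (hf.mul hg) hi)]
  exact integral_congr fun s _ => by ring

theorem exists_pos_abs_stratonovichSum_integral_sub_integral_mul_lt {a b ε : ℝ} {f g : ℝ → ℝ}
    (hf : ContinuousOn f (Icc a b)) (hg : ContinuousOn g (Icc a b)) (hε : 0 < ε) :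
    ∃ δ > 0, ∀ (n : ℕ) (t : ℕ → ℝ), IsPartition a b n t → (∀ i < n, t (i + 1) - t i < δ) →
      |stratonovichSum f (fun s => ∫ u in a..s, g u) n t - ∫ s in a..b, f s * g s| < ε := by
  obtain ⟨M, hM⟩ := isCompact_Icc.exists_bound_of_continuousOn hg
  set η := ε / ((|M| + 1) * (|b - a| + 1))
  obtain ⟨δ, hδ, hfδ⟩ := Metric.uniformContinuousOn_iff.1
    (isCompact_Icc.uniformContinuousOn_of_continuous hf) η (by positivity)
  refine ⟨δ, hδ, fun n t hP hmesh => ?_⟩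
  have hpiece : ∀ i < n,
      |∫ s in t i..t (i + 1), ((f (t (i + 1)) + f (t i)) / 2 - f s) * g s| ≤
        η * |M| * (t (i + 1) - t i) := by
    intro i hi
    have hab : ∀ s ∈ Icc (t i) (t (i + 1)), s ∈ Icc a b := fun s hs =>
      hP.uIcc_subset hi (Icc_subset_uIcc hs)
    refine abs_integral_midpoint_sub_mul_le (hP.2.2 i hi).le (fun s hs => ⟨?_, ?_⟩)
      fun s hs => (hM s (hab s hs)).trans (le_abs_self M)
    · refine (hfδ _ (hP.mem_Icc hi.le) s (hab s hs) ?_).le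
      rw [Real.dist_eq, abs_sub_lt_iff]
      constructor <;> linarith [hs.1, hs.2, hmesh i hi]
    · refine (hfδ _ (hP.mem_Icc hi) s (hab s hs) ?_).le
      rw [Real.dist_eq, abs_sub_lt_iff]
      constructor <;> linarith [hs.1, hs.2, hmesh i hi]
  have hC : |M| * (b - a) < (|M| + 1) * (|b - a| + 1) := by
    nlinarith [le_abs_self (b - a), abs_nonneg M, abs_nonneg (b - a)]
  rw [hP.stratonovichSum_integral_sub_integral_mul hf hg]
  calc _ ≤ ∑ i ∈ Finset.range n,
          |∫ s in t i..t (i + 1), ((f (t (i + 1)) + f (t i)) / 2 - f s) * g s| :=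
        Finset.abs_sum_le_sum_abs _ _
    _ ≤ ∑ i ∈ Finset.range n, η * |M| * (t (i + 1) - t i) :=
        Finset.sum_le_sum fun i hi => hpiece i (Finset.mem_range.1 hi)
    _ = η * (|M| * (b - a)) := by rw [← Finset.mul_sum, hP.sum_sub, mul_assoc]
    _ < η * ((|M| + 1) * (|b - a| + 1)) := by gcongr
    _ = ε := div_mul_cancel₀ _ (by positivity)

theorem fCIR_satisfies_Stratonovich_SDE (k a σ T : ℝ) (hσ : 0 < σ)
    (B Y : ℝ → ℝ)
    (hYcont : ContinuousOn Y (Set.Icc 0 T)) (hYpos : ∀ t ∈ Set.Icc (0:ℝ) T, 0 < Y t)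
    (hY : ∀ t ∈ Set.Icc (0:ℝ) T,
      Y t = Y 0 + (1 / 2) * (∫ s in (0:ℝ)..t, (k / Y s - a * Y s)) + (σ / 2) * B t) :
    ∃ S : ℝ,
      (∀ ε : ℝ, 0 < ε → ∃ δ : ℝ, 0 < δ ∧ ∀ (n : ℕ) (t : ℕ → ℝ), 0 < n →
        t 0 = 0 → t n = T → (∀ i < n, t i < t (i + 1)) → (∀ i < n, t (i + 1) - t i < δ) →
        |(∑ i ∈ Finset.range n,
            ((Real.sqrt ((Y (t (i + 1))) ^ 2) + Real.sqrt ((Y (t i)) ^ 2)) / 2) *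
              (B (t (i + 1)) - B (t i))) - S| < ε) ∧
      (Y T) ^ 2 = (Y 0) ^ 2 + (∫ s in (0:ℝ)..T, (k - a * (Y s) ^ 2)) + σ * S := by
  set g : ℝ → ℝ := fun s => k / Y s - a * Y s
  have hgcont : ContinuousOn g (Icc 0 T) :=
    (continuousOn_const.div hYcont fun s hs => (hYpos s hs).ne').sub
      (continuousOn_const.mul hYcont)
  have hYg : ∀ s ∈ Icc (0:ℝ) T, k - a * Y s ^ 2 = Y s * g s := by
    intro s hs
    have := (hYpos s hs).ne'
    simp only [g]
    field_simp
  refine ⟨(Y T ^ 2 - Y 0 ^ 2 - ∫ s in (0:ℝ)..T, (k - a * Y s ^ 2)) / σ, fun ε hε => ?_,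
    by field_simp; ring⟩
  obtain ⟨δ, hδ, hconv⟩ :=
    exists_pos_abs_stratonovichSum_integral_sub_integral_mul_lt hYcont hgcont (mul_pos hε hσ)
  refine ⟨δ, hδ, fun n t _ ht0 htn hmono hmesh => ?_⟩
  have hP : IsPartition 0 T n t := ⟨ht0, htn, hmono⟩
  rw [integral_congr fun s hs => hYg s (uIcc_of_le hP.le ▸ hs)]
  change |stratonovichSum (fun s => √(Y s ^ 2)) B n t - _| < ε
  rw [hP.stratonovichSum_sqrt_sq_eq hσ.ne' hYpos hY, ← sub_div, abs_div, abs_of_pos hσ,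
    div_lt_iff₀ hσ, abs_sub_comm]
  refine lt_of_eq_of_lt ?_ (hconv n t hP hmesh)
  congr 1
  ring
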